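/- arXiv:1312.1166 — 3 statements merged into one kernel-verified Lean document; each statement's English description precedes it below -/
import Mathlib

section
/- Let a, b be integers and m a positive integer with gcd(b, m) = 1. Then the set {a^n + b·n : n = 1, ..., m²} contains a complete system of residues modulo m; that is, for every integer r there exists n with 1 ≤ n ≤ m² such that a^n + b·n ≡ r (mod m). -/
/-!
Strong induction on `m`, for the stronger claim that every window `(N, N + m²]` contains a
suitable `n`. Modulo `m > 1` the powers of `a` are periodic from some `i ≤ m` on, with a period
`0 < t < m` (Euler's theorem for units, pigeonhole on `a, …, a^m` otherwise). With
`g = gcd(t, m) < m`, induction gives `n₀` in the window `(max N i, max N i + g²]` that works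
modulo `g`. Along `n₀ + k t` the power `a^n` is fixed modulo `m` while `b n` moves by `b t k`;
as `gcd(b t, m) = g` divides the remaining error, some `k < m / g` fixes it modulo `m`, and
`g² + k t ≤ m t` keeps `n₀ + k t` inside `(N, N + m²]`.
-/

theorem exists_pow_add_eq_pow_of_not_isUnit {M : Type*} [Monoid M] [Fintype M] {A : M}
    (hA : ¬IsUnit A) :
    ∃ i t : ℕ, 0 < i ∧ 0 < t ∧ i + t ≤ Fintype.card M ∧ A ^ (i + t) = A ^ i := by
  classical
  have hmaps : ∀ k ∈ Finset.Icc 1 (Fintype.card M), A ^ k ∈ Finset.univ.erase 1 := fun k hk ↦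
    Finset.mem_erase.2
      ⟨fun h ↦ hA (.of_pow_eq_one h (Nat.one_le_iff_ne_zero.1 (Finset.mem_Icc.1 hk).1)),
        Finset.mem_univ _⟩
  have hcard : (Finset.univ.erase (1 : M)).card < (Finset.Icc 1 (Fintype.card M)).card := by
    rw [Finset.card_erase_of_mem (Finset.mem_univ _), Nat.card_Icc, Finset.card_univ]
    have := Fintype.card_pos (α := M)
    omega
  obtain ⟨x, hx, y, hy, hxy, hpow⟩ := Finset.exists_ne_map_eq_of_card_lt_of_maps_to hcard hmaps
  rw [Finset.mem_Icc] at hx hy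
  rcases hxy.lt_or_gt with h | h
  · exact ⟨x, y - x, by omega, by omega, by omega, by rw [Nat.add_sub_cancel' h.le, hpow]⟩
  · exact ⟨y, x - y, by omega, by omega, by omega, by rw [Nat.add_sub_cancel' h.le, hpow]⟩

theorem ZMod.exists_pow_add_eq_pow {m : ℕ} (hm : 1 < m) (A : ZMod m) :
    ∃ i t : ℕ, i ≤ m ∧ 0 < t ∧ t < m ∧ A ^ (i + t) = A ^ i := by
  have : NeZero m := ⟨by omega⟩
  by_cases hA : IsUnit A
  · refine ⟨0, m.totient, Nat.zero_le _, Nat.totient_pos.2 (by omega), Nat.totient_lt m hm, ?_⟩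
    rw [zero_add, pow_zero, ← hA.unit_spec, ← Units.val_pow_eq_pow_val, ZMod.pow_totient,
      Units.val_one]
  · obtain ⟨i, t, hi, ht, hit, h⟩ := exists_pow_add_eq_pow_of_not_isUnit hA
    rw [ZMod.card] at hit
    exact ⟨i, t, by omega, ht, by omega, h⟩

theorem pow_add_mul_eq_pow_of_pow_add_eq_pow {M : Type*} [Monoid M] {A : M} {i t n : ℕ}
    (h : A ^ (i + t) = A ^ i) (hn : i ≤ n) (k : ℕ) : A ^ (n + k * t) = A ^ n := by
  obtain ⟨d, rfl⟩ := Nat.exists_eq_add_of_le hn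
  induction k with
  | zero => simp
  | succ k ih =>
    rw [show i + d + (k + 1) * t = i + t + (d + k * t) by ring, pow_add, h, ← pow_add,
      ← add_assoc, ih]

theorem Int.exists_lt_mul_modEq {u c : ℤ} {m : ℕ} (hm : 0 < m) (hc : (Int.gcd u m : ℤ) ∣ c) :
    ∃ k : ℕ, k < m / Int.gcd u m ∧ u * k ≡ c [ZMOD m] := by
  set g := Int.gcd u m with hg_def
  have hg : 0 < g := Int.gcd_pos_of_ne_zero_right _ (by omega)
  obtain ⟨m', hm'⟩ : g ∣ m := Nat.gcd_dvd_right _ _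
  obtain ⟨u', hu'⟩ : (g : ℤ) ∣ u := Int.gcd_dvd_left _ _
  obtain ⟨c', rfl⟩ := hc
  have hm'pos : (0 : ℤ) < m' := by
    have : 0 < m' := Nat.pos_of_mul_pos_left (hm'.symm ▸ hm)
    omega
  set x := u.gcdA m * c'
  refine ⟨(x % m').toNat, ?_, ?_⟩
  · rw [hm', Nat.mul_div_cancel_left _ hg]
    have := Int.emod_lt_of_pos x hm'pos
    omega
  · rw [Int.toNat_of_nonneg (Int.emod_nonneg x hm'pos.ne')]
    calc u * (x % m') ≡ u * x [ZMOD m] := by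
          rw [hu', hm', Nat.cast_mul, mul_assoc, mul_assoc]
          exact ((Int.mod_modEq x m').mul_left u').mul_left' (c := g)
      _ = (g - m * u.gcdB m) * c' := by rw [hg_def, Int.gcd_eq_gcd_ab]; ring
      _ ≡ g * c' [ZMOD m] := Int.modEq_iff_dvd.2 ⟨u.gcdB m * c', by ring⟩

theorem Int.gcd_mul_left_natCast_of_gcd_eq_one {b : ℤ} {m : ℕ} (hb : Int.gcd b m = 1) (t : ℕ) :
    Int.gcd (b * t) m = Nat.gcd t m := by
  simpa [Int.gcd, Int.natAbs_mul] using Nat.Coprime.gcd_mul_left_cancel t hb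

theorem sq_add_mul_le_mul_mul {g t k m' : ℕ} (hg : 0 < g) (hgt : g ≤ t) (hk : k < m') :
    g ^ 2 + k * t ≤ g * m' * t := by
  have hgm' : g + m' ≤ g * m' + 1 := by nlinarith
  nlinarith [Nat.mul_le_mul_left g hgt, Nat.mul_le_mul_right t hk, Nat.mul_le_mul_right t hgm']

theorem exists_pow_add_mul_modEq_of_gcd_eq_one (a b r : ℤ) {m : ℕ} (hm : 0 < m)
    (hb : Int.gcd b m = 1) (N : ℕ) :
    ∃ n : ℕ, N < n ∧ n ≤ N + m ^ 2 ∧ a ^ n + b * n ≡ r [ZMOD m] := by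
  induction m using Nat.strong_induction_on generalizing N with
  | _ m ih =>
  obtain rfl | hm1 : m = 1 ∨ 1 < m := by omega
  · exact ⟨N + 1, by omega, by omega, Int.modEq_one⟩
  obtain ⟨i, t, him, ht, htm, hper⟩ := ZMod.exists_pow_add_eq_pow hm1 (a : ZMod m)
  set g := t.gcd m
  have hg : 0 < g := Nat.gcd_pos_of_pos_left m ht
  have hgt : g ≤ t := Nat.gcd_le_left m ht
  obtain ⟨n₀, hNn₀, hn₀, hn₀r⟩ :=
    ih g (by omega) hg (Nat.Coprime.coprime_dvd_right (Nat.gcd_dvd_right t m) hb) (max N i)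
  have hgcd := Int.gcd_mul_left_natCast_of_gcd_eq_one hb t
  obtain ⟨k, hk, hkc⟩ := Int.exists_lt_mul_modEq (u := b * t) (c := r - (a ^ n₀ + b * n₀)) hm
    (by rw [hgcd]; exact hn₀r.dvd)
  rw [hgcd] at hk
  refine ⟨n₀ + k * t, by omega, ?_, ?_⟩
  · have hm' : g * (m / g) = m := Nat.mul_div_cancel' (Nat.gcd_dvd_right t m)
    have hstep := sq_add_mul_le_mul_mul hg hgt hk
    rw [hm'] at hstep
    nlinarith [max_le_add_of_nonneg (Nat.zero_le N) (Nat.zero_le i), Nat.mul_le_mul_left m htm]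
  · have ha : a ^ (n₀ + k * t) ≡ a ^ n₀ [ZMOD m] := (ZMod.intCast_eq_intCast_iff _ _ _).1 <| by
      push_cast
      exact pow_add_mul_eq_pow_of_pow_add_eq_pow hper (by omega) k
    calc a ^ (n₀ + k * t) + b * ↑(n₀ + k * t) ≡ a ^ n₀ + b * n₀ + b * t * k [ZMOD m] := by
          push_cast
          rw [mul_add, ← add_assoc, mul_comm (k : ℤ), ← mul_assoc]
          exact ha.add_right _ |>.add_right _
      _ ≡ a ^ n₀ + b * n₀ + (r - (a ^ n₀ + b * n₀)) [ZMOD m] := hkc.add_left _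
      _ = r := by ring

theorem stmt_0 (a b : ℤ) (m : ℕ) (hm : 0 < m) (hb : Int.gcd b m = 1) (r : ℤ) :
    ∃ n : ℕ, 1 ≤ n ∧ n ≤ m ^ 2 ∧ a ^ n + b * n ≡ r [ZMOD m] := by
  obtain ⟨n, hn, hnm, hnr⟩ := exists_pow_add_mul_modEq_of_gcd_eq_one a b r hm hb 0
  exact ⟨n, hn, by simpa using hnm, hnr⟩
end

section
/- Let a, b be integers and m a positive integer with gcd(a·b, m) = 1. Then for every integer r there exists a positive integer n ≤ m² such that a^n + b·n ≡ r (mod m). -/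
/-! Modulo `m`, the map `n ↦ a ^ n + b * n` is periodic with period `lcm ℓ m ≤ m ^ 2`, where `ℓ` is
the multiplicative order of `a`, so it suffices to show that it is surjective on `ℕ`. This goes by
strong induction on `m`: since `ℓ ∣ φ m < m`, the modulus `gcd ℓ m` is smaller than `m`. -/

open Function

theorem Function.Periodic.exists_mem_Ioc_nat {α : Type*} {f : ℕ → α} {c : ℕ} (hf : Periodic f c)
    (hc : 0 < c) (n : ℕ) : ∃ k ∈ Set.Ioc 0 c, f k = f n := by
  refine ⟨(n + c - 1) % c + 1, ⟨Nat.succ_pos _, Nat.mod_lt _ hc⟩, ?_⟩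
  rw [(hf.add_const 1).map_mod_nat, Nat.sub_add_cancel (by omega), hf]

theorem periodic_pow_add_mul_natCast {R : Type*} [CommRing R] {x y : R} {c : ℕ}
    (hx : x ^ c = 1) (hc : (c : R) = 0) : Periodic (fun n : ℕ => x ^ n + y * n) c := by
  intro n
  simp only [pow_add, hx, Nat.cast_add, hc]
  ring

theorem orderOf_intCast_dvd_totient {a : ℤ} {m : ℕ} (ha : IsCoprime a m) :
    orderOf (a : ZMod m) ∣ Nat.totient m := by
  rw [← ZMod.coe_unitOfIsCoprime a ha, orderOf_units]
  exact orderOf_dvd_of_pow_eq_one (ZMod.pow_totient _)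

theorem orderOf_intCast_pos {a : ℤ} {m : ℕ} (hm : 0 < m) (ha : IsCoprime a m) :
    0 < orderOf (a : ZMod m) :=
  Nat.pos_of_dvd_of_pos (orderOf_intCast_dvd_totient ha) (Nat.totient_pos.2 hm)

theorem orderOf_intCast_le_totient {a : ℤ} {m : ℕ} (hm : 0 < m) (ha : IsCoprime a m) :
    orderOf (a : ZMod m) ≤ Nat.totient m :=
  Nat.le_of_dvd (Nat.totient_pos.2 hm) (orderOf_intCast_dvd_totient ha)

theorem ZMod.exists_natCast_mul_eq_intCast {k m : ℕ} {c : ℤ} (hc : (k.gcd m : ℤ) ∣ c) :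
    ∃ t : ZMod m, (k : ZMod m) * t = c := by
  obtain ⟨d, rfl⟩ := hc
  refine ⟨k.gcdA m * d, ?_⟩
  rw [Nat.gcd_eq_gcd_ab]
  push_cast
  rw [ZMod.natCast_self]
  ring

theorem exists_pow_add_mul_eq_intCast {a b : ℤ} {m : ℕ} (hm : 0 < m) (ha : IsCoprime a m)
    (hb : IsCoprime b m) (r : ℤ) : ∃ n : ℕ, (a : ZMod m) ^ n + b * n = r := by
  induction m using Nat.strong_induction_on generalizing r with
  | _ m ih =>
    obtain rfl | hm1 : m = 1 ∨ 1 < m := by omega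
    · exact ⟨0, Subsingleton.elim _ _⟩
    have : NeZero m := ⟨hm.ne'⟩
    set ℓ := orderOf (a : ZMod m)
    have hℓ_pos : 0 < ℓ := orderOf_intCast_pos hm ha
    have hℓ_lt : ℓ < m := (orderOf_intCast_le_totient hm ha).trans_lt (Nat.totient_lt m hm1)
    -- Shifting `n` by multiples of `ℓ` fixes `a ^ n` and moves `b * n` through `b * ℓ * ℤ`,
    -- which modulo `m` is `gcd ℓ m * ℤ`; so it suffices to solve the problem modulo `gcd ℓ m`.
    set g := ℓ.gcd m
    have hg_dvd : (g : ℤ) ∣ m := Int.natCast_dvd_natCast.2 (Nat.gcd_dvd_right ℓ m)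
    obtain ⟨y, hy⟩ := ih g ((Nat.gcd_le_left m hℓ_pos).trans_lt hℓ_lt)
      (Nat.gcd_pos_of_pos_left m hℓ_pos) (ha.of_isCoprime_of_dvd_right hg_dvd)
      (hb.of_isCoprime_of_dvd_right hg_dvd) r
    have hc : (g : ℤ) ∣ r - (a ^ y + b * y) := by
      rw [← ZMod.intCast_eq_intCast_iff_dvd_sub]
      push_cast
      exact hy
    obtain ⟨t, ht⟩ := ZMod.exists_natCast_mul_eq_intCast hc
    refine ⟨y + ℓ * ((b : ZMod m)⁻¹ * t).val, ?_⟩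
    rw [pow_add, pow_mul, pow_orderOf_eq_one, one_pow, mul_one]
    push_cast [ZMod.natCast_zmod_val] at ht ⊢
    linear_combination ht + ℓ * t * ZMod.coe_int_mul_inv_eq_one hb

theorem stmt_1 (a b : ℤ) (m : ℕ) (hm : 0 < m) (hab : Int.gcd (a * b) m = 1) (r : ℤ) :
    ∃ n : ℕ, 1 ≤ n ∧ n ≤ m ^ 2 ∧ a ^ n + b * n ≡ r [ZMOD m] := by
  have hab' : IsCoprime (a * b) m := Int.isCoprime_iff_gcd_eq_one.2 hab
  have ha := hab'.of_mul_left_left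
  obtain ⟨n, hn⟩ := exists_pow_add_mul_eq_intCast hm ha hab'.of_mul_left_right r
  set ℓ := orderOf (a : ZMod m)
  have hℓ_pos : 0 < ℓ := orderOf_intCast_pos hm ha
  have hℓ_le : ℓ ≤ m := (orderOf_intCast_le_totient hm ha).trans (Nat.totient_le m)
  have hperiodic : Periodic (fun n : ℕ => (a : ZMod m) ^ n + b * n) (ℓ.lcm m) :=
    periodic_pow_add_mul_natCast (orderOf_dvd_iff_pow_eq_one.1 (Nat.dvd_lcm_left ℓ m))
      ((ZMod.natCast_eq_zero_iff _ _).2 (Nat.dvd_lcm_right ℓ m))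
  obtain ⟨k, ⟨hk_pos, hk_le⟩, hk⟩ := hperiodic.exists_mem_Ioc_nat (Nat.lcm_pos hℓ_pos hm) n
  have hlcm_le : ℓ.lcm m ≤ m ^ 2 := calc
    ℓ.lcm m ≤ ℓ * m := Nat.le_of_dvd (by positivity) (Nat.lcm_dvd_mul ℓ m)
    _ ≤ m ^ 2 := by nlinarith
  refine ⟨k, hk_pos, hk_le.trans hlcm_le, (ZMod.intCast_eq_intCast_iff _ _ _).1 ?_⟩
  push_cast
  exact hk.trans hn
end

section
/- For any positive integer m and any integer b coprime to m and any integer a, the map sending n to (a^n + b·n) mod m, restricted to n ∈ {1, ..., m²}, is surjective onto Z/mZ. -/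
/-!
Modulo `m` the powers of `a` are eventually periodic: `a ^ (i + t) ≡ a ^ i` with `i < m` and
`0 < t < m` (a period `t = m` would force `a` to be a unit of order `m`, but there are fewer
than `m` units). Induct on `m`. For `d = gcd t m < m`, the induction hypothesis gives `n ≥ i`
with `a ^ n + b n ≡ r (mod d)`; move `n` within its class mod `t` into the window `[N, N + t)`.
Adding `t k` leaves `a ^ n` fixed mod `m`, and since `gcd (b t) m = d`, some `k < m` makes the
sum `≡ r (mod m)`. This keeps `n` inside `[N, N + m ^ 2)`.
-/

section Monoid

variable {M : Type*} [Monoid M] {x : M} {i t : ℕ}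

lemma pow_add_mul_eq_of_pow_add_eq (h : x ^ (i + t) = x ^ i) {n : ℕ} (hn : i ≤ n) (k : ℕ) :
    x ^ (n + t * k) = x ^ n := by
  obtain ⟨j, rfl⟩ := Nat.exists_eq_add_of_le hn
  induction k with
  | zero => simp
  | succ k ih =>
    calc x ^ (i + j + t * (k + 1)) = x ^ (i + t) * x ^ (j + t * k) := by
          rw [← pow_add]; ring_nf
      _ = x ^ (i + j + t * k) := by rw [h, ← pow_add]; ring_nf
      _ = x ^ (i + j) := ih

lemma pow_eq_pow_of_pow_add_eq_of_modEq (h : x ^ (i + t) = x ^ i) {p q : ℕ} (hp : i ≤ p)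
    (hq : i ≤ q) (hpq : p ≡ q [MOD t]) : x ^ p = x ^ q := by
  have key : p + t * (q / t) = q + t * (p / t) := by
    have := Nat.div_add_mod p t
    have := Nat.div_add_mod q t
    unfold Nat.ModEq at hpq
    omega
  rw [← pow_add_mul_eq_of_pow_add_eq h hp (q / t), key, pow_add_mul_eq_of_pow_add_eq h hq]

lemma exists_pow_add_eq_pow_of_card_units_lt [Fintype M] [DecidableEq M]
    (hM : Fintype.card Mˣ < Fintype.card M) (x : M) :
    ∃ i t, i < Fintype.card M ∧ 0 < t ∧ t < Fintype.card M ∧ x ^ (i + t) = x ^ i := by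
  by_cases hx : IsUnit x
  · obtain ⟨u, rfl⟩ := hx
    refine ⟨0, orderOf u, by omega, orderOf_pos u, orderOf_le_card_univ.trans_lt hM, ?_⟩
    rw [zero_add, pow_zero, ← Units.val_pow_eq_pow_val, pow_orderOf_eq_one, Units.val_one]
  obtain ⟨p, q, hpq, hpow⟩ := Fintype.exists_ne_map_eq_of_card_lt
    (fun k : Fin (Fintype.card M + 1) => x ^ (k : ℕ)) (by simp)
  wlog hlt : p < q generalizing p q
  · exact this q p hpq.symm hpow.symm (lt_of_le_of_ne (not_lt.mp hlt) hpq.symm)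
  have hq := q.isLt
  -- a collision at distance `card M` can only be `x ^ card M = x ^ 0`, making `x` a unit
  have hgap : (q : ℕ) - p < Fintype.card M := by
    by_contra hge
    have hp0 : (p : ℕ) = 0 := by omega
    have hqM : (q : ℕ) = Fintype.card M := by omega
    refine hx (IsUnit.of_pow_eq_one (n := Fintype.card M) ?_ (by omega))
    simpa [hp0, hqM] using hpow.symm
  refine ⟨p, q - p, by omega, by omega, hgap, ?_⟩
  rw [Nat.add_sub_cancel' hlt.le]
  exact hpow.symm

end Monoid

lemma Nat.exists_mem_Ico_modEq {t : ℕ} (ht : 0 < t) (L n : ℕ) :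
    ∃ c ∈ Set.Ico L (L + t), c ≡ n [MOD t] := by
  have hmod := Nat.mod_lt (n + t * L - L) ht
  refine ⟨L + (n + t * L - L) % t, ⟨by omega, by omega⟩, ?_⟩
  have hL : L ≤ t * L := Nat.le_mul_of_pos_left L ht
  calc L + (n + t * L - L) % t ≡ L + (n + t * L - L) [MOD t] :=
        Nat.ModEq.add_left _ (Nat.mod_modEq _ _)
    _ = n + t * L := by omega
    _ ≡ n [MOD t] := Nat.add_modulus_mul_modEq_iff.mpr rfl

lemma Int.exists_lt_mul_mul_modEq {b B : ℤ} {t m : ℕ} (hm : 0 < m) (hb : IsCoprime b m)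
    (hB : (t.gcd m : ℤ) ∣ B) : ∃ k : ℕ, k < m ∧ b * t * k ≡ B [ZMOD m] := by
  have : NeZero m := ⟨hm.ne'⟩
  obtain ⟨u, v, huv⟩ := hb
  obtain ⟨s, rfl⟩ := hB
  refine ⟨((u * t.gcdA m * s : ℤ) : ZMod m).val, ZMod.val_lt _, ?_⟩
  rw [← ZMod.intCast_eq_intCast_iff]
  push_cast
  rw [ZMod.natCast_zmod_val]
  have hinv : (u : ZMod m) * b = 1 := by
    simpa using congrArg (Int.cast : ℤ → ZMod m) huv
  have hbezout : ((t.gcd m : ℕ) : ZMod m) = t * t.gcdA m := by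
    simpa using congrArg (Int.cast : ℤ → ZMod m) (Nat.gcd_eq_gcd_ab t m)
  rw [hbezout]
  linear_combination (t * (t.gcdA m : ZMod m) * s) * hinv

theorem exists_pow_add_mul_modEq (a b : ℤ) {m : ℕ} (hm : 0 < m) (hb : IsCoprime b m)
    (r : ℤ) (N : ℕ) : ∃ n, N ≤ n ∧ n < N + m ^ 2 ∧ a ^ n + b * n ≡ r [ZMOD m] := by
  induction m using Nat.strong_induction_on generalizing r N with
  | _ m IH =>
  obtain rfl | hm2 : m = 1 ∨ 2 ≤ m := by omega
  · exact ⟨N, le_rfl, by simp, by simp [Int.modEq_one]⟩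
  have : NeZero m := ⟨hm.ne'⟩
  obtain ⟨i, t, him, ht, htm, hper⟩ := exists_pow_add_eq_pow_of_card_units_lt
    (by rw [ZMod.card_units_eq_totient, ZMod.card]; exact Nat.totient_lt m hm2) (a : ZMod m)
  rw [ZMod.card] at him htm
  have periodic {p q : ℕ} (hp : i ≤ p) (hq : i ≤ q) (hpq : p ≡ q [MOD t]) :
      a ^ p ≡ a ^ q [ZMOD m] :=
    (ZMod.intCast_eq_intCast_iff _ _ _).mp <| by
      push_cast; exact pow_eq_pow_of_pow_add_eq_of_modEq hper hp hq hpq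
  have hdm : ((t.gcd m : ℕ) : ℤ) ∣ m := Int.natCast_dvd_natCast.mpr (Nat.gcd_dvd_right t m)
  have hdlt : t.gcd m < m := (Nat.le_of_dvd ht (Nat.gcd_dvd_left t m)).trans_lt htm
  obtain ⟨n₀, hin₀, -, hn₀⟩ :=
    IH _ hdlt (Nat.gcd_pos_of_pos_left m ht) (hb.of_isCoprime_of_dvd_right hdm) r i
  obtain ⟨c, ⟨hNc, hcN⟩, hcn₀⟩ := Nat.exists_mem_Ico_modEq ht (max N i) n₀
  have hc : a ^ c + b * c ≡ r [ZMOD t.gcd m] :=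
    (((periodic (by omega) hin₀ hcn₀).of_dvd hdm).add
      ((Int.natCast_modEq_iff.mpr (hcn₀.of_dvd (Nat.gcd_dvd_left t m))).mul_left b)).trans hn₀
  obtain ⟨k, hkm, hk⟩ := Int.exists_lt_mul_mul_modEq hm hb hc.dvd
  refine ⟨c + t * k, by omega, ?_, ?_⟩
  · have h1 : t * (k + 1) ≤ t * m := Nat.mul_le_mul_left t hkm
    have h2 : (t + 1) * m ≤ m * m := Nat.mul_le_mul_right m htm
    rcases le_total N i with hNi | hiN
    · rw [max_eq_right hNi] at hcN; nlinarith
    · rw [max_eq_left hiN] at hcN; nlinarith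
  · calc a ^ (c + t * k) + b * ((c + t * k : ℕ) : ℤ)
          = a ^ (c + t * k) + (b * c + b * t * k) := by push_cast; ring
      _ ≡ a ^ c + (b * c + (r - (a ^ c + b * c))) [ZMOD m] :=
          (periodic (by omega) (by omega) (Nat.add_modulus_mul_modEq_iff.mpr rfl)).add
            (hk.add_left _)
      _ = r := by ring

theorem stmt_8 (a b : ℤ) (m : ℕ) (hm : 0 < m) (hb : Int.gcd b m = 1) :
    ∀ r : ZMod m, ∃ n : ℕ, 1 ≤ n ∧ n ≤ m ^ 2 ∧
      (a : ZMod m) ^ n + (b : ZMod m) * (n : ZMod m) = r := by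
  intro r
  obtain ⟨r, rfl⟩ := ZMod.intCast_surjective r
  obtain ⟨n, hn1, hnm, hn⟩ :=
    exists_pow_add_mul_modEq a b hm (Int.isCoprime_iff_gcd_eq_one.mpr hb) r 1
  refine ⟨n, hn1, by omega, ?_⟩
  exact_mod_cast (ZMod.intCast_eq_intCast_iff _ _ _).mpr hn
end
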